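/- arXiv:1205.4844 — 4 statements merged into one kernel-verified Lean document; each statement's English description precedes it below -/
import Mathlib

section
/- Let h : [0,∞) → (0,∞) be differentiable with h(0) = 1, and let δ : [0,∞) → (0,∞) be differentiable with δ(0) = 1. If h(t+a) = h(a)·h(t/δ(a)) for all t, a ≥ 0, then h satisfies the differential equation (1 + βt)·h'(t) = α·h(t) for all t ≥ 0, where α = h'(0) and β = δ'(0). -/
/-!
Differentiate both sides of `h (t + a) = h a * h (t / δ a)` in `a` at `a = 0` (one-sidedly, from
the right). The left side gives `h' t`; by the product and chain rules the right side gives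
`h' 0 * h t - h' t * t * δ' 0`, using `h 0 = δ 0 = 1`. Equating the two is the differential equation.
-/

open Set

lemma HasDerivWithinAt.comp_const_add_Ici {f : ℝ → ℝ} {f' t : ℝ} (ht : 0 ≤ t)
    (hf : HasDerivWithinAt f f' (Ici 0) t) :
    HasDerivWithinAt (fun a => f (t + a)) f' (Ici 0) 0 := by
  have hshift : HasDerivWithinAt (fun a : ℝ => t + a) 1 (Ici 0) 0 :=
    (hasDerivWithinAt_id 0 _).const_add t
  have hmaps : MapsTo (fun a : ℝ => t + a) (Ici 0) (Ici 0) := fun a ha =>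
    mem_Ici.2 (add_nonneg ht ha)
  have hf₀ : HasDerivWithinAt f f' (Ici 0) (t + 0) := by rwa [add_zero]
  exact (hf₀.comp 0 hshift hmaps).congr_deriv (mul_one f')

lemma HasDerivWithinAt.comp_const_div_Ici {f δ : ℝ → ℝ} {f' β t : ℝ} (ht : 0 ≤ t)
    (hδ : ∀ a, 0 ≤ a → 0 ≤ δ a) (hδ0 : δ 0 = 1)
    (hf : HasDerivWithinAt f f' (Ici 0) t) (hδ' : HasDerivWithinAt δ β (Ici 0) 0) :
    HasDerivWithinAt (fun a => f (t / δ a)) (-(f' * t * β)) (Ici 0) 0 := by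
  have hquot : HasDerivWithinAt (fun a => t / δ a) (-(t * β)) (Ici 0) 0 := by
    refine ((hasDerivWithinAt_const 0 (Ici 0) t).div hδ' (by simp [hδ0])).congr_deriv ?_
    simp [hδ0]
  have hmaps : MapsTo (fun a => t / δ a) (Ici 0) (Ici 0) := fun a ha =>
    mem_Ici.2 (div_nonneg ht (hδ a ha))
  have hf₀ : HasDerivWithinAt f f' (Ici 0) (t / δ 0) := by rwa [hδ0, div_one]
  exact (hf₀.comp 0 hquot hmaps).congr_deriv (by ring)

theorem functional_equation_to_ode_general (h δ : ℝ → ℝ)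
    (δpos : ∀ t, 0 ≤ t → 0 < δ t)
    (hdiff : DifferentiableOn ℝ h (Ici 0)) (δdiff : DifferentiableOn ℝ δ (Ici 0))
    (h0 : h 0 = 1) (δ0 : δ 0 = 1)
    (hfe : ∀ t a, 0 ≤ t → 0 ≤ a → h (t + a) = h a * h (t / δ a)) :
    ∀ t, 0 ≤ t →
      (1 + derivWithin δ (Ici 0) 0 * t) * derivWithin h (Ici 0) t =
        derivWithin h (Ici 0) 0 * h t := by
  intro t ht
  have hh₀ := (hdiff 0 self_mem_Ici).hasDerivWithinAt
  have hht := (hdiff t (mem_Ici.2 ht)).hasDerivWithinAt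
  have hδ₀ := (δdiff 0 self_mem_Ici).hasDerivWithinAt
  have hlhs := hht.comp_const_add_Ici ht
  have hrhs := (hh₀.mul (hht.comp_const_div_Ici ht (fun a ha => (δpos a ha).le) δ0 hδ₀)).congr
    (fun a ha => hfe t a ht ha) (hfe t 0 ht le_rfl)
  have hderiv := (uniqueDiffOn_Ici 0 0 self_mem_Ici).eq_deriv _ hlhs hrhs
  rw [h0, δ0, div_one] at hderiv
  linear_combination hderiv

/-- If `h(t+a) = h(a) h(t/δ(a))` on `[0,∞)` with `h(0) = δ(0) = 1`, `h, δ > 0`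
and differentiable, then `(1 + βt) h'(t) = α h(t)` with `α = h'(0)`, `β = δ'(0)`
(one-sided derivatives on `[0,∞)`). -/
theorem functional_equation_to_ode (h δ : ℝ → ℝ)
    (hpos : ∀ t, 0 ≤ t → 0 < h t) (δpos : ∀ t, 0 ≤ t → 0 < δ t)
    (hdiff : DifferentiableOn ℝ h (Ici 0)) (δdiff : DifferentiableOn ℝ δ (Ici 0))
    (h0 : h 0 = 1) (δ0 : δ 0 = 1)
    (hfe : ∀ t a, 0 ≤ t → 0 ≤ a → h (t + a) = h a * h (t / δ a)) :
    ∀ t, 0 ≤ t →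
      (1 + derivWithin δ (Ici 0) 0 * t) * derivWithin h (Ici 0) t =
        derivWithin h (Ici 0) 0 * h t :=
  functional_equation_to_ode_general h δ δpos hdiff δdiff h0 δ0 hfe
end

section
/- Let α < 0 < β and suppose h : [0,∞) → ℝ is continuous, h(0) = 1, h is differentiable wherever h > 0, and (1 - βt)·h'(t) = α·h(t) whenever h(t) > 0, with h(t) = 0 for t ≥ 1/β. If -α/β > 1, then h(t) = (1-βt)_+^{-α/β}, and h is the unique such solution. -/
open Set Real
open scoped Topology

/-- Compact-support branch: if `α < 0 < β`, `-α/β > 1`, `h` is continuous on `[0,∞)` with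
`h(0)=1`, `h(t)=0` for `t ≥ 1/β`, `h` differentiable wherever positive and satisfying
`(1-βt) h'(t) = α h(t)` there, then `h(t) = (1-βt)₊^(-α/β)`. -/
theorem ode_solution_compact_support (α β : ℝ) (hα : α < 0) (hβ : 0 < β)
    (hexp : 1 < -α / β) (h : ℝ → ℝ)
    (hcont : ContinuousOn h (Ici 0)) (h0 : h 0 = 1)
    (hzero : ∀ t, 1 / β ≤ t → h t = 0)
    (hdiff : ∀ t, 0 ≤ t → 0 < h t → DifferentiableAt ℝ h t)
    (hode : ∀ t, 0 ≤ t → 0 < h t → (1 - β * t) * deriv h t = α * h t) :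
    ∀ t, 0 ≤ t → h t = (max (1 - β * t) 0) ^ (-α / β) := by
  have hβe : β * (α / β) = α := by field_simp
  -- Key lemma: on any interval [0,b] ⊆ [0,1/β) where h is positive,
  -- the function h t * (1-βt)^(α/β) is constant equal to 1.
  have key : ∀ b : ℝ, 0 ≤ b → b < 1 / β → (∀ s ∈ Icc (0:ℝ) b, 0 < h s) →
      h b * (1 - β * b) ^ (α / β) = 1 := by
    intro b hb0 hb1 hpos
    set φ : ℝ → ℝ := fun t => h t * (1 - β * t) ^ (α / β) with hφ
    have hbase : ∀ x ∈ Icc (0:ℝ) b, 0 < 1 - β * x := by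
      intro x hx
      have h1 : β * x < β * (1 / β) := by
        have := hx.2
        exact mul_lt_mul_of_pos_left (lt_of_le_of_lt this hb1) hβ
      have h2 : β * (1 / β) = 1 := by field_simp
      linarith
    have hderiv : ∀ x ∈ Ico (0:ℝ) b, HasDerivWithinAt φ 0 (Ici x) x := by
      intro x hx
      have hx' : x ∈ Icc (0:ℝ) b := ⟨hx.1, hx.2.le⟩
      have hpx : 0 < h x := hpos x hx'
      have hux : 0 < 1 - β * x := hbase x hx'
      have Hh : HasDerivAt h (deriv h x) x := (hdiff x hx.1 hpx).hasDerivAt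
      have Hu : HasDerivAt (fun t : ℝ => 1 - β * t) (-β) x := by
        simpa using ((hasDerivAt_id x).const_mul β).const_sub 1
      have Hg : HasDerivAt (fun t : ℝ => (1 - β * t) ^ (α / β))
          (-β * (α / β) * (1 - β * x) ^ (α / β - 1)) x :=
        Hu.rpow_const (Or.inl (ne_of_gt hux))
      have Hφ : HasDerivAt φ
          (deriv h x * (1 - β * x) ^ (α / β)
            + h x * (-β * (α / β) * (1 - β * x) ^ (α / β - 1))) x := Hh.mul Hg
      have hodex := hode x hx.1 hpx
      have hue : (1 - β * x) ^ (α / β) = (1 - β * x) ^ (α / β - 1) * (1 - β * x) := by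
        rw [← Real.rpow_add_one (ne_of_gt hux) (α / β - 1)]
        ring_nf
      have hzero' : deriv h x * (1 - β * x) ^ (α / β)
          + h x * (-β * (α / β) * (1 - β * x) ^ (α / β - 1)) = 0 := by
        rw [hue]
        have hβe' : -β * (α / β) = -α := by rw [neg_mul, hβe]
        rw [hβe']
        linear_combination ((1 - β * x) ^ (α / β - 1)) * hodex
      rw [hzero'] at Hφ
      exact Hφ.hasDerivWithinAt
    have hφcont : ContinuousOn φ (Icc 0 b) := by
      apply ContinuousOn.mul (hcont.mono (fun x hx => hx.1))
      apply ContinuousOn.rpow_const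
      · exact (continuous_const.sub (continuous_const.mul continuous_id)).continuousOn
      · intro x hx
        exact Or.inl (ne_of_gt (hbase x hx))
    have hconst := constant_of_has_deriv_right_zero hφcont hderiv b
      (right_mem_Icc.mpr hb0)
    have hφ0 : φ 0 = 1 := by
      simp only [hφ, mul_zero, sub_zero, Real.one_rpow, h0, one_mul]
    rw [hφ0] at hconst
    exact hconst
  -- Positivity: h > 0 on [0, 1/β).
  have hpos : ∀ t, 0 ≤ t → t < 1 / β → 0 < h t := by
    by_contra hcon
    push_neg at hcon
    obtain ⟨t₀, ht₀0, ht₀1, ht₀⟩ := hcon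
    set A : Set ℝ := {t | t ∈ Icc 0 (1 / β) ∧ h t ≤ 0} with hA
    have hβpos : (0:ℝ) < 1 / β := by positivity
    have hAne : A.Nonempty := ⟨t₀, ⟨ht₀0, ht₀1.le⟩, ht₀⟩
    have hAclosed : IsClosed A := by
      have : A = Icc 0 (1 / β) ∩ h ⁻¹' (Iic 0) := by
        ext x; simp [hA, Set.mem_inter_iff, and_comm]
      rw [this]
      exact (hcont.mono (fun x hx => hx.1)).preimage_isClosed_of_isClosed
        isClosed_Icc isClosed_Iic
    have hAbdd : BddBelow A := ⟨0, fun x hx => hx.1.1⟩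
    set c := sInf A with hc
    have hcA : c ∈ A := hAclosed.csInf_mem hAne hAbdd
    have hc0 : 0 ≤ c := hcA.1.1
    have hc1 : c ≤ 1 / β := hcA.1.2
    have hchle : h c ≤ 0 := hcA.2
    have hcpos : 0 < c := by
      rcases lt_or_eq_of_le hc0 with hlt | heq
      · exact hlt
      · exfalso; rw [← heq, h0] at hchle; linarith
    have hltc : ∀ t, 0 ≤ t → t < c → 0 < h t := by
      intro t ht0 htc
      by_contra hle
      push_neg at hle
      have : t ∈ A := ⟨⟨ht0, le_trans htc.le hc1⟩, hle⟩
      exact absurd (csInf_le hAbdd this) (not_le.mpr htc)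
    have hclt : c < 1 / β := by
      rcases lt_or_eq_of_le hc1 with hlt | heq
      · exact hlt
      · exfalso
        -- c = 1/β; then t₀ < c so h t₀ > 0, contradiction
        rw [← heq] at ht₀1
        exact absurd (hltc t₀ ht₀0 ht₀1) (not_lt.mpr ht₀)
    -- on [0, c), h agrees with (1-βt)^(-α/β)
    have heqf : ∀ t ∈ Ico (0:ℝ) c, h t = (1 - β * t) ^ (-α / β) := by
      intro t ht
      have htpos : ∀ s ∈ Icc (0:ℝ) t, 0 < h s := fun s hs =>
        hltc s hs.1 (lt_of_le_of_lt hs.2 ht.2)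
      have hk := key t ht.1 (lt_trans ht.2 hclt) htpos
      have hut : 0 < 1 - β * t := by
        have h1 : β * t < β * (1 / β) := mul_lt_mul_of_pos_left (lt_trans ht.2 hclt) hβ
        have h2 : β * (1 / β) = 1 := by field_simp
        linarith
      have hA' : (1 - β * t) ^ (α / β) ≠ 0 := ne_of_gt (Real.rpow_pos_of_pos hut _)
      have : h t = ((1 - β * t) ^ (α / β))⁻¹ := by
        field_simp at hk ⊢
        linarith [hk]
      rw [this, neg_div, Real.rpow_neg hut.le]
    -- continuity forces h c = (1-βc)^(-α/β) > 0, contradiction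
    have huc : 0 < 1 - β * c := by
      have h1 : β * c < β * (1 / β) := mul_lt_mul_of_pos_left hclt hβ
      have h2 : β * (1 / β) = 1 := by field_simp
      linarith
    have hne : (𝓝[Ico (0:ℝ) c] c).NeBot := by
      apply mem_closure_iff_nhdsWithin_neBot.1
      rw [closure_Ico (ne_of_lt hcpos)]
      exact right_mem_Icc.mpr hc0
    have hth : Filter.Tendsto h (𝓝[Ico (0:ℝ) c] c) (𝓝 (h c)) :=
      (hcont.continuousWithinAt (mem_Ici.mpr hc0)).mono (fun x hx => hx.1)
    have htf : Filter.Tendsto (fun t : ℝ => (1 - β * t) ^ (-α / β))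
        (𝓝[Ico (0:ℝ) c] c) (𝓝 ((1 - β * c) ^ (-α / β))) := by
      apply Filter.Tendsto.mono_left _ nhdsWithin_le_nhds
      exact (((continuous_const.sub (continuous_const.mul continuous_id)).continuousAt).rpow_const
        (Or.inl (ne_of_gt huc)))
    have hth' : Filter.Tendsto h (𝓝[Ico (0:ℝ) c] c) (𝓝 ((1 - β * c) ^ (-α / β))) := by
      refine htf.congr' ?_
      filter_upwards [self_mem_nhdsWithin] with x hx
      exact (heqf x hx).symm
    have heq := tendsto_nhds_unique hth hth'
    have : 0 < h c := heq ▸ Real.rpow_pos_of_pos huc _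
    linarith
  -- Conclusion
  intro t ht
  rcases lt_or_ge t (1 / β) with hlt | hge
  · have hut : 0 < 1 - β * t := by
      have h1 : β * t < β * (1 / β) := mul_lt_mul_of_pos_left hlt hβ
      have h2 : β * (1 / β) = 1 := by field_simp
      linarith
    have hk := key t ht hlt (fun s hs => hpos s hs.1 (lt_of_le_of_lt hs.2 hlt))
    have hA' : (1 - β * t) ^ (α / β) ≠ 0 := ne_of_gt (Real.rpow_pos_of_pos hut _)
    have hmax : max (1 - β * t) 0 = 1 - β * t := max_eq_left hut.le
    rw [hmax, neg_div, Real.rpow_neg hut.le]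
    field_simp at hk ⊢
    linarith [hk]
  · have hut : 1 - β * t ≤ 0 := by
      have h1 : β * (1 / β) ≤ β * t := mul_le_mul_of_nonneg_left hge hβ.le
      have h2 : β * (1 / β) = 1 := by field_simp
      linarith
    rw [hzero t hge, max_eq_right hut, Real.zero_rpow (by linarith : -α / β ≠ 0)]
end

section
/- Let g : [0,∞) → (0,∞) be differentiable with g(0) = 1, and suppose there exist differentiable functions ξ, δ : [0,∞) → (0,∞) with δ(0) = 1 such that g(t+a) = ξ(a)·g(t/δ(a)) for all t, a ≥ 0. Then with α = g'(0) and β = δ'(0): if β > 0 then g(t) = (1+βt)^{α/β} for all t ≥ 0. -/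
/-!
Setting `t = 0` in the functional equation gives `ξ = g`, so `g (t + a) = g a * g (t / δ a)`.
Differentiating in `a` at `a = 0` yields the ODE `(1 + β t) g'(t) = α g(t)`, whose solutions on
`[0, ∞)` are exactly the multiples of `(1 + β t) ^ (α / β)`: the ratio of `g` to this power has
zero derivative.
-/

open Set Real

theorem deriv_mul_one_add_eq_of_functional_eq {g δ : ℝ → ℝ} {g' α β t : ℝ} (ht : 0 ≤ t)
    (hδ : ∀ a, 0 ≤ a → 0 ≤ δ a) (hg0 : g 0 = 1) (hδ0 : δ 0 = 1)
    (hfe : ∀ a, 0 ≤ a → g (t + a) = g a * g (t / δ a))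
    (hgt : HasDerivWithinAt g g' (Ici 0) t) (hα : HasDerivWithinAt g α (Ici 0) 0)
    (hβ : HasDerivWithinAt δ β (Ici 0) 0) :
    g' * (1 + β * t) = α * g t := by
  have hshift : HasDerivWithinAt (fun a => g (t + a)) g' (Ici 0) 0 := by
    have hadd : HasDerivWithinAt (fun a : ℝ => t + a) 1 (Ici 0) 0 :=
      (hasDerivWithinAt_id 0 _).const_add t
    simpa [Function.comp_def] using
      hgt.comp_of_eq 0 hadd (fun a ha => add_nonneg ht ha) (add_zero t).symm
  have hscale : HasDerivWithinAt (fun a => g (t / δ a)) (g' * -(t * β)) (Ici 0) 0 := by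
    have hdiv : HasDerivWithinAt (fun a => t / δ a) (-(t * β)) (Ici 0) 0 := by
      simpa [hδ0] using (hasDerivWithinAt_const 0 (Ici 0) t).fun_div hβ (by simp [hδ0])
    exact hgt.comp_of_eq 0 hdiv (fun a ha => div_nonneg ht (hδ a ha)) (by simp [hδ0])
  have hprod : HasDerivWithinAt (fun a => g (t + a)) (α * g t + g' * -(t * β)) (Ici 0) 0 := by
    have := hα.mul hscale
    simp only [hδ0, div_one, hg0, one_mul] at this
    exact this.congr_of_mem hfe self_mem_Ici
  linear_combination (uniqueDiffOn_Ici 0 0 self_mem_Ici).eq_deriv _ hshift hprod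

theorem eq_mul_rpow_of_deriv_mul_one_add_eq {g g' : ℝ → ℝ} {α β : ℝ} (hβ : 0 < β)
    (hg : ∀ t ∈ Ici (0 : ℝ), HasDerivWithinAt g (g' t) (Ici 0) t)
    (hode : ∀ t ∈ Ici (0 : ℝ), g' t * (1 + β * t) = α * g t) :
    ∀ t ∈ Ici (0 : ℝ), g t = g 0 * (1 + β * t) ^ (α / β) := by
  have hpos : ∀ t ∈ Ici (0 : ℝ), 0 < 1 + β * t := fun t ht => by
    have : (0 : ℝ) ≤ t := ht
    positivity
  set ratio := fun t => g t * (1 + β * t) ^ (-(α / β))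
  have hratio : ∀ t ∈ Ici (0 : ℝ), HasDerivWithinAt ratio 0 (Ici 0) t := by
    intro t ht
    have hlin : HasDerivWithinAt (fun s => 1 + β * s) β (Ici 0) t := by
      simpa using ((hasDerivWithinAt_id t _).const_mul β).const_add 1
    refine ((hg t ht).mul (hlin.rpow_const (Or.inl (hpos t ht).ne'))).congr_deriv ?_
    have hsplit : (1 + β * t) ^ (-(α / β)) = (1 + β * t) ^ (-(α / β) - 1) * (1 + β * t) := by
      rw [← rpow_add_one (hpos t ht).ne']
      ring_nf
    rw [hsplit]
    have hβα : β * (α / β) = α := mul_div_cancel₀ α hβ.ne'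
    linear_combination (1 + β * t) ^ (-(α / β) - 1) * (hode t ht - g t * hβα)
  have hcont : ContinuousOn ratio (Ici 0) := fun t ht => (hratio t ht).continuousWithinAt
  intro t ht
  have hconst : ratio t = ratio 0 :=
    constant_of_has_deriv_right_zero (hcont.mono Icc_subset_Ici_self)
      (fun x hx => (hratio x hx.1).mono (Ici_subset_Ici.mpr hx.1)) t ⟨ht, le_rfl⟩
  simp only [ratio, mul_zero, add_zero, one_rpow, mul_one, rpow_neg (hpos t ht).le] at hconst
  field_simp [(rpow_pos_of_pos (hpos t ht) (α / β)).ne'] at hconst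
  linear_combination hconst

theorem elliptical_generator_characterization_general (g ξ δ : ℝ → ℝ)
    (hδpos : ∀ t, 0 ≤ t → 0 < δ t)
    (hgdiff : DifferentiableOn ℝ g (Ici 0))
    (hδdiff : DifferentiableOn ℝ δ (Ici 0))
    (hg0 : g 0 = 1) (hδ0 : δ 0 = 1)
    (hfe : ∀ t a, 0 ≤ t → 0 ≤ a → g (t + a) = ξ a * g (t / δ a))
    (hβ : 0 < derivWithin δ (Ici 0) 0) :
    ∀ t, 0 ≤ t →
      g t = (1 + derivWithin δ (Ici 0) 0 * t) ^
        (derivWithin g (Ici 0) 0 / derivWithin δ (Ici 0) 0) := by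
  have hξg : ∀ a, 0 ≤ a → ξ a = g a := fun a ha => by
    simpa [hg0] using (hfe 0 a le_rfl ha).symm
  have hg : ∀ t ∈ Ici (0 : ℝ), HasDerivWithinAt g (derivWithin g (Ici 0) t) (Ici 0) t :=
    fun t ht => (hgdiff t ht).hasDerivWithinAt
  have hode : ∀ t ∈ Ici (0 : ℝ),
      derivWithin g (Ici 0) t * (1 + derivWithin δ (Ici 0) 0 * t)
        = derivWithin g (Ici 0) 0 * g t := fun t ht =>
    deriv_mul_one_add_eq_of_functional_eq ht (fun a ha => (hδpos a ha).le) hg0 hδ0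
      (fun a ha => by rw [hfe t a ht ha, hξg a ha]) (hg t ht) (hg 0 self_mem_Ici)
      (hδdiff 0 self_mem_Ici).hasDerivWithinAt
  intro t ht
  simpa [hg0] using eq_mul_rpow_of_deriv_mul_one_add_eq hβ hg hode t ht

/-- Elliptical characterization: if a positive differentiable generator `g` with `g(0)=1`
satisfies `g(t+a) = ξ(a) g(t/δ(a))` on `[0,∞)` with `δ(0)=1`, and `β = δ'(0) > 0`, then
`g(t) = (1+βt)^(α/β)` where `α = g'(0)` (Pearson type VII / Student-t generator). -/
theorem elliptical_generator_characterization (g ξ δ : ℝ → ℝ)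
    (hgpos : ∀ t, 0 ≤ t → 0 < g t) (hξpos : ∀ t, 0 ≤ t → 0 < ξ t)
    (hδpos : ∀ t, 0 ≤ t → 0 < δ t)
    (hgdiff : DifferentiableOn ℝ g (Ici 0)) (hξdiff : DifferentiableOn ℝ ξ (Ici 0))
    (hδdiff : DifferentiableOn ℝ δ (Ici 0))
    (hg0 : g 0 = 1) (hδ0 : δ 0 = 1)
    (hfe : ∀ t a, 0 ≤ t → 0 ≤ a → g (t + a) = ξ a * g (t / δ a))
    (hβ : 0 < derivWithin δ (Ici 0) 0) :
    ∀ t, 0 ≤ t →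
      g t = (1 + derivWithin δ (Ici 0) 0 * t) ^
        (derivWithin g (Ici 0) 0 / derivWithin δ (Ici 0) 0) :=
  elliptical_generator_characterization_general g ξ δ hδpos hgdiff hδdiff hg0 hδ0 hfe hβ
end

section
/- For the trivariate exchangeable Marshall–Olkin model with all rates λ_I = λ, the conditional survival function of (X₁,X₂) given X₃ = x₃ is F̄(x₁,x₂|x₃) = (1/4) e^{-λ(x₁+x₂+max(x₁,x₂))} · [4·𝟙{x₁,x₂ ≤ x₃} + e^{-λ(x₁+x₂+max(x₁,x₂)-3x₃)}·𝟙{x₁,x₂ > x₃} + 2e^{-2λ(x₂-x₃)}·𝟙{x₁≤x₃ < x₂} + 2e^{-2λ(x₁-x₃)}·𝟙{x₂≤x₃ < x₁}]. -/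
open Real MeasureTheory ProbabilityTheory Set Filter Topology

/-!
The joint survival function `P(X₁ > x₁, X₂ > x₂, X₃ > t)` is `exp (-λ φ(t))`, where `φ(t)` sums,
over the seven shocks `E_I`, the largest threshold among the coordinates in `I`; likewise
`X₃ ∼ Exp(4λ)`. The claimed conditional survival function `G` satisfies
`G(s) · 4λ e^{-4λs} = λ φ'(s) e^{-λ φ(s)}`, where `φ'` is the right derivative of the piecewise
linear `φ`, so integrating `G` against the law of `X₃` over `(t, ∞)` gives back `exp (-λ φ(t))`.
Two finite measures carried by `(0, ∞)` that agree on all tails `(t, ∞)` coincide, and this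
identifies `G(X₃)` as the conditional expectation. Here `φ`, `φ'` and `G` are
`marshallOlkinExponent`, `marshallOlkinSlope` and `marshallOlkinCondSurvival`.
-/

lemma hasDerivWithinAt_max_const_Ioi (c x : ℝ) :
    HasDerivWithinAt (fun t => max c t) (if c ≤ x then 1 else 0) (Ioi x) x := by
  split_ifs with hcx
  · exact (hasDerivWithinAt_id x _).congr (fun t ht => max_eq_right (hcx.trans (le_of_lt ht)))
      (max_eq_right hcx)
  · have hxc : x < c := not_le.1 hcx
    refine (hasDerivWithinAt_const x (Ioi x) c).congr_of_eventuallyEq ?_ (max_eq_left hxc.le)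
    filter_upwards [nhdsWithin_le_nhds (Iio_mem_nhds hxc)] with t ht using max_eq_left (le_of_lt ht)

lemma MeasureTheory.integral_Ioi_of_hasDerivWithinAt_Ioi_of_tendsto {f f' : ℝ → ℝ} {a m : ℝ}
    (hcont : ContinuousOn f (Ici a)) (hderiv : ∀ x ∈ Ioi a, HasDerivWithinAt f (f' x) (Ioi x) x)
    (hint : IntegrableOn f' (Ioi a)) (hf : Tendsto f atTop (𝓝 m)) :
    ∫ x in Ioi a, f' x = m - f a := by
  refine tendsto_nhds_unique (intervalIntegral_tendsto_integral_Ioi a hint tendsto_id) ?_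
  refine (hf.sub_const (f a)).congr' ?_
  filter_upwards [eventually_ge_atTop a] with b hab
  exact (intervalIntegral.integral_eq_sub_of_hasDeriv_right_of_le hab
    (hcont.mono Icc_subset_Ici_self) (fun x hx => hderiv x hx.1)
    ((intervalIntegrable_iff_integrableOn_Ioc_of_le hab).2
      (hint.mono_set Ioc_subset_Ioi_self))).symm

lemma MeasureTheory.Measure.ext_of_Ioi_of_Iic_eq_zero {ν₁ ν₂ : Measure ℝ} [IsFiniteMeasure ν₂]
    {a : ℝ} (h₁ : ν₁ (Iic a) = 0) (h₂ : ν₂ (Iic a) = 0) (h : ∀ t, a ≤ t → ν₁ (Ioi t) = ν₂ (Ioi t)) :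
    ν₁ = ν₂ := by
  have huniv : ν₁ univ = ν₂ univ := by
    rw [← Iic_union_Ioi (a := a), measure_union (Iic_disjoint_Ioi le_rfl) measurableSet_Ioi,
      measure_union (Iic_disjoint_Ioi le_rfl) measurableSet_Ioi, h₁, h₂, h a le_rfl]
  have : IsFiniteMeasure ν₁ := ⟨huniv ▸ measure_lt_top ν₂ univ⟩
  refine Measure.ext_of_Iic ν₁ ν₂ fun t => ?_
  rcases le_or_gt a t with hat | hta
  · rw [← compl_Ioi, measure_compl measurableSet_Ioi (measure_ne_top _ _),
      measure_compl measurableSet_Ioi (measure_ne_top _ _), huniv, h t hat]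
  · rw [measure_mono_null (Iic_subset_Iic.2 hta.le) h₁,
      measure_mono_null (Iic_subset_Iic.2 hta.le) h₂]

lemma MeasureTheory.condExp_indicator_comap_ae_eq_comp {Ω β : Type*} {mΩ : MeasurableSpace Ω}
    [mβ : MeasurableSpace β] {μ : Measure Ω} [IsFiniteMeasure μ] {X : Ω → β}
    (hX : Measurable X) {A : Set Ω} (hA : MeasurableSet A) {g : β → ℝ} (hg : Measurable g)
    (hg0 : ∀ y, 0 ≤ g y)
    (h : (μ.map X).withDensity (fun y => ENNReal.ofReal (g y)) = (μ.restrict A).map X) :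
    μ[A.indicator (fun _ => (1 : ℝ)) | mβ.comap X] =ᵐ[μ] g ∘ X := by
  have hg_int : Integrable g (μ.map X) := by
    refine ⟨hg.aestronglyMeasurable, (hasFiniteIntegral_iff_ofReal (ae_of_all _ hg0)).2 ?_⟩
    rw [← setLIntegral_univ, ← withDensity_apply _ MeasurableSet.univ, h]
    exact measure_lt_top _ _
  refine (ae_eq_condExp_of_forall_setIntegral_eq hX.comap_le
    ((integrable_const 1).indicator hA)
    (fun _ _ _ => ((integrable_map_measure hg.aestronglyMeasurable hX.aemeasurable).1
      hg_int).integrableOn) ?_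
    (hg.comp (comap_measurable X)).aestronglyMeasurable).symm
  rintro _ ⟨B, hB, rfl⟩ -
  rw [setIntegral_indicator hA, setIntegral_const, smul_eq_mul, mul_one, measureReal_def,
    ← Measure.restrict_apply (hX hB), ← Measure.map_apply hX hB, ← h,
    withDensity_apply _ hB, Function.comp_def,
    ← setIntegral_map hB hg.aestronglyMeasurable hX.aemeasurable,
    integral_eq_lintegral_of_nonneg_ae (ae_of_all _ hg0) hg.aestronglyMeasurable]

lemma ProbabilityTheory.withDensity_exponentialPDFReal (r : ℝ) :
    volume.withDensity (fun x => ENNReal.ofReal (exponentialPDFReal r x)) = expMeasure r :=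
  rfl

lemma ProbabilityTheory.expMeasure_Iic {r : ℝ} (hr : 0 < r) (t : ℝ) :
    expMeasure r (Iic t) = ENNReal.ofReal (if 0 ≤ t then 1 - exp (-(r * t)) else 0) := by
  have := isProbabilityMeasure_expMeasure hr
  rw [← ofReal_cdf, cdf_expMeasure_eq hr]

lemma ProbabilityTheory.expMeasure_Iic_zero {r : ℝ} (hr : 0 < r) : expMeasure r (Iic 0) = 0 := by
  simp [expMeasure_Iic hr]

lemma ProbabilityTheory.expMeasure_Ioi {r t : ℝ} (hr : 0 < r) (ht : 0 ≤ t) :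
    expMeasure r (Ioi t) = ENNReal.ofReal (exp (-(r * t))) := by
  have := isProbabilityMeasure_expMeasure hr
  rw [← compl_Iic, prob_compl_eq_one_sub measurableSet_Iic, expMeasure_Iic hr, if_pos ht,
    ← ENNReal.ofReal_one, ← ENNReal.ofReal_sub _ (sub_nonneg.2 (exp_le_one_iff.2 ?_)),
    sub_sub_cancel]
  nlinarith

lemma ProbabilityTheory.setLIntegral_expMeasure (r : ℝ) {f : ℝ → ENNReal} (hf : Measurable f)
    {s : Set ℝ} (hs : MeasurableSet s) :
    ∫⁻ x in s, f x ∂expMeasure r = ∫⁻ x in s, exponentialPDF r x * f x :=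
  setLIntegral_withDensity_eq_setLIntegral_mul _ (measurable_exponentialPDFReal r).ennreal_ofReal
    hf hs

lemma ProbabilityTheory.iIndepFun.measure_biInter_preimage_Ioi_eq_exp {Ω ι : Type*}
    {mΩ : MeasurableSpace Ω} {μ : Measure Ω} {E : ι → Ω → ℝ} (hindep : iIndepFun E μ) {l : ℝ}
    (hl : 0 < l) (hmeas : ∀ i, Measurable (E i)) (hexp : ∀ i, μ.map (E i) = expMeasure l)
    (S : Finset ι) {R : ι → ℝ} (hR : ∀ i ∈ S, 0 ≤ R i) :
    μ (⋂ i ∈ S, E i ⁻¹' Ioi (R i)) = ENNReal.ofReal (exp (-(l * ∑ i ∈ S, R i))) := by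
  rw [hindep.meas_biInter fun i _ => ⟨Ioi (R i), measurableSet_Ioi, rfl⟩,
    Finset.prod_congr rfl fun i hi => by
      rw [← Measure.map_apply (hmeas i) measurableSet_Ioi, hexp i, expMeasure_Ioi hl (hR i hi)],
    ← ENNReal.ofReal_prod_of_nonneg fun i _ => (exp_pos _).le, ← exp_sum, Finset.mul_sum,
    Finset.sum_neg_distrib]

def marshallOlkinExponent (x₁ x₂ t : ℝ) : ℝ :=
  x₁ + x₂ + t + max x₁ x₂ + max x₁ t + max x₂ t + max (max x₁ x₂) t

noncomputable def marshallOlkinSlope (x₁ x₂ t : ℝ) : ℝ :=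
  1 + (if x₁ ≤ t then 1 else 0) + (if x₂ ≤ t then 1 else 0) + (if max x₁ x₂ ≤ t then 1 else 0)

noncomputable def marshallOlkinCondSurvival (l x₁ x₂ s : ℝ) : ℝ :=
  (1 / 4) * Real.exp (-(l * (x₁ + x₂ + max x₁ x₂))) *
    ((if x₁ ≤ s ∧ x₂ ≤ s then (4 : ℝ) else 0) +
      (if s < x₁ ∧ s < x₂ then
        Real.exp (-(l * (x₁ + x₂ + max x₁ x₂ - 3 * s))) else 0) +
      (if x₁ ≤ s ∧ s < x₂ then 2 * Real.exp (-(2 * l * (x₂ - s))) else 0) +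
      (if x₂ ≤ s ∧ s < x₁ then 2 * Real.exp (-(2 * l * (x₁ - s))) else 0))

section MarshallOlkin

variable {x₁ x₂ : ℝ}

lemma hasDerivWithinAt_marshallOlkinExponent (t : ℝ) :
    HasDerivWithinAt (marshallOlkinExponent x₁ x₂) (marshallOlkinSlope x₁ x₂ t) (Ioi t) t := by
  have := ((((hasDerivWithinAt_const t (Ioi t) (x₁ + x₂)).add (hasDerivWithinAt_id t _)).add
    (hasDerivWithinAt_const t _ (max x₁ x₂))).add (hasDerivWithinAt_max_const_Ioi x₁ t)).add
    (hasDerivWithinAt_max_const_Ioi x₂ t) |>.add (hasDerivWithinAt_max_const_Ioi (max x₁ x₂) t)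
  exact this.congr_deriv (by simp only [marshallOlkinSlope]; ring)

lemma measurable_marshallOlkinSlope : Measurable (marshallOlkinSlope x₁ x₂) := by
  refine ((measurable_const.add ?_).add ?_).add ?_ <;>
    exact measurable_const.ite measurableSet_Ici measurable_const

lemma four_mul_add_le_marshallOlkinExponent (t : ℝ) :
    4 * t + (x₁ + x₂ + max x₁ x₂) ≤ marshallOlkinExponent x₁ x₂ t := by
  unfold marshallOlkinExponent
  linarith [le_max_right x₁ t, le_max_right x₂ t, le_max_right (max x₁ x₂) t]

lemma marshallOlkinSlope_nonneg (t : ℝ) : 0 ≤ marshallOlkinSlope x₁ x₂ t := by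
  unfold marshallOlkinSlope
  positivity

lemma marshallOlkinSlope_le_four (t : ℝ) : marshallOlkinSlope x₁ x₂ t ≤ 4 := by
  unfold marshallOlkinSlope
  split_ifs <;> norm_num

lemma marshallOlkinCondSurvival_eq (l s : ℝ) :
    marshallOlkinCondSurvival l x₁ x₂ s =
      marshallOlkinSlope x₁ x₂ s / 4 * exp (-(l * (marshallOlkinExponent x₁ x₂ s - 4 * s))) := by
  unfold marshallOlkinCondSurvival marshallOlkinSlope marshallOlkinExponent
  rcases le_or_gt x₁ s with h₁ | h₁ <;> rcases le_or_gt x₂ s with h₂ | h₂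
  · simp only [h₁, h₂, and_self, if_true, not_lt.2, and_false, if_false, max_eq_right,
      max_le h₁ h₂]
    ring_nf
  · simp only [h₁, h₂, and_self, if_true, not_lt.2, not_le.2, and_false, if_false, and_true,
      max_eq_right, max_eq_left h₂.le, max_eq_right (h₁.trans h₂.le)]
    ring_nf
    simp only [← exp_add]
    ring_nf
  · simp only [h₁, h₂, and_self, if_true, not_lt.2, not_le.2, and_false, if_false, and_true,
      max_eq_right, max_eq_left h₁.le, max_eq_left (h₂.trans h₁.le)]
    ring_nf
    simp only [← exp_add]
    ring_nf
  · simp only [h₁, h₂, and_self, if_true, not_le.2, false_and, if_false, max_eq_left h₁.le,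
      max_eq_left h₂.le, max_eq_left (h₁.le.trans (le_max_left x₁ x₂)),
      not_le.2 (h₁.trans_le (le_max_left x₁ x₂))]
    ring_nf
    simp only [← exp_add]
    ring_nf

lemma continuous_marshallOlkinExponent : Continuous (marshallOlkinExponent x₁ x₂) := by
  unfold marshallOlkinExponent
  fun_prop

lemma tendsto_marshallOlkinExponent_atTop :
    Tendsto (marshallOlkinExponent x₁ x₂) atTop atTop :=
  tendsto_atTop_mono four_mul_add_le_marshallOlkinExponent
    (tendsto_atTop_add_const_right _ _ (tendsto_id.const_mul_atTop four_pos))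

lemma integrableOn_slope_mul_exp_marshallOlkinExponent {l : ℝ} (hl : 0 < l) (t : ℝ) :
    IntegrableOn (fun s => l * marshallOlkinSlope x₁ x₂ s *
      exp (-(l * marshallOlkinExponent x₁ x₂ s))) (Ioi t) := by
  refine ((exp_neg_integrableOn_Ioi t (by positivity : 0 < 4 * l)).const_mul
    (4 * l * exp (-(l * (x₁ + x₂ + max x₁ x₂))))).mono' ?_ (ae_of_all _ fun s => ?_)
  · exact ((measurable_const.mul measurable_marshallOlkinSlope).mul
      (continuous_marshallOlkinExponent.const_mul l).neg.rexp.measurable).aestronglyMeasurable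
  · have := marshallOlkinSlope_nonneg (x₁ := x₁) (x₂ := x₂) s
    rw [norm_of_nonneg (by positivity)]
    calc l * marshallOlkinSlope x₁ x₂ s * exp (-(l * marshallOlkinExponent x₁ x₂ s))
        ≤ l * 4 * exp (-(l * (x₁ + x₂ + max x₁ x₂)) + -(4 * l) * s) := by
          gcongr
          · exact marshallOlkinSlope_le_four s
          · nlinarith [four_mul_add_le_marshallOlkinExponent (x₁ := x₁) (x₂ := x₂) s]
      _ = _ := by rw [exp_add]; ring

lemma integral_Ioi_slope_mul_exp_marshallOlkinExponent {l : ℝ} (hl : 0 < l) (t : ℝ) :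
    ∫ s in Ioi t, l * marshallOlkinSlope x₁ x₂ s * exp (-(l * marshallOlkinExponent x₁ x₂ s)) =
      exp (-(l * marshallOlkinExponent x₁ x₂ t)) := by
  have h := integral_Ioi_of_hasDerivWithinAt_Ioi_of_tendsto
    (f' := fun s => -(l * marshallOlkinSlope x₁ x₂ s * exp (-(l * marshallOlkinExponent x₁ x₂ s))))
    (continuous_marshallOlkinExponent.const_mul l).neg.rexp.continuousOn
    (fun s _ => (((hasDerivWithinAt_marshallOlkinExponent s).const_mul l).neg.exp).congr_deriv
      (by simp only [Pi.neg_apply]; ring))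
    (integrableOn_slope_mul_exp_marshallOlkinExponent hl t).neg
    (tendsto_exp_atBot.comp (tendsto_neg_atTop_atBot.comp
      (tendsto_marshallOlkinExponent_atTop.const_mul_atTop hl)))
  rwa [integral_neg, zero_sub, neg_inj] at h

lemma measurable_marshallOlkinCondSurvival (l : ℝ) :
    Measurable (marshallOlkinCondSurvival l x₁ x₂) := by
  simp only [funext (marshallOlkinCondSurvival_eq l)]
  exact (measurable_marshallOlkinSlope.div_const 4).mul
    ((continuous_marshallOlkinExponent.sub (continuous_const.mul continuous_id)).const_mul
      l).neg.rexp.measurable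

lemma marshallOlkinCondSurvival_nonneg (l s : ℝ) : 0 ≤ marshallOlkinCondSurvival l x₁ x₂ s := by
  have := marshallOlkinSlope_nonneg (x₁ := x₁) (x₂ := x₂) s
  rw [marshallOlkinCondSurvival_eq]
  positivity

lemma setLIntegral_Ioi_marshallOlkinCondSurvival_expMeasure {l t : ℝ} (hl : 0 < l)
    (ht : 0 ≤ t) :
    ∫⁻ s in Ioi t, ENNReal.ofReal (marshallOlkinCondSurvival l x₁ x₂ s) ∂expMeasure (4 * l) =
      ENNReal.ofReal (exp (-(l * marshallOlkinExponent x₁ x₂ t))) := by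
  rw [setLIntegral_expMeasure _ (measurable_marshallOlkinCondSurvival l).ennreal_ofReal
    measurableSet_Ioi, setLIntegral_congr_fun measurableSet_Ioi (g := fun s => ENNReal.ofReal
      (l * marshallOlkinSlope x₁ x₂ s * exp (-(l * marshallOlkinExponent x₁ x₂ s)))),
    ← ofReal_integral_eq_lintegral_ofReal (integrableOn_slope_mul_exp_marshallOlkinExponent hl t)
      (ae_of_all _ fun s => by
        have := marshallOlkinSlope_nonneg (x₁ := x₁) (x₂ := x₂) s
        positivity),
    integral_Ioi_slope_mul_exp_marshallOlkinExponent hl]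
  intro s hs
  dsimp only
  rw [exponentialPDF_of_nonneg (ht.trans (le_of_lt hs)), ← ENNReal.ofReal_mul (by positivity),
    marshallOlkinCondSurvival_eq]
  congr 1
  rw [show -(l * marshallOlkinExponent x₁ x₂ s) =
    -(4 * l * s) + -(l * (marshallOlkinExponent x₁ x₂ s - 4 * s)) by ring, exp_add]
  ring

end MarshallOlkin

section Model

variable {Ω : Type*} {mΩ : MeasurableSpace Ω} {μ : Measure Ω} {l : ℝ} {E : Fin 7 → Ω → ℝ}

lemma measure_marshallOlkin_survival (hl : 0 < l) (hmeas : ∀ i, Measurable (E i))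
    (hindep : iIndepFun E μ) (hexp : ∀ i, μ.map (E i) = expMeasure l) {x₁ x₂ t : ℝ}
    (hx₁ : 0 ≤ x₁) (hx₂ : 0 ≤ x₂) (ht : 0 ≤ t) :
    μ {ω | x₁ < min (E 0 ω) (min (E 3 ω) (min (E 4 ω) (E 6 ω))) ∧
        x₂ < min (E 1 ω) (min (E 3 ω) (min (E 5 ω) (E 6 ω))) ∧
        t < min (E 2 ω) (min (E 4 ω) (min (E 5 ω) (E 6 ω)))} =
      ENNReal.ofReal (exp (-(l * marshallOlkinExponent x₁ x₂ t))) := by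
  set R : Fin 7 → ℝ := ![x₁, x₂, t, max x₁ x₂, max x₁ t, max x₂ t, max (max x₁ x₂) t]
  have hR : ∀ i ∈ Finset.univ, 0 ≤ R i := by
    intro i _
    fin_cases i <;> simp [R, hx₁, hx₂, ht]
  have hsum : marshallOlkinExponent x₁ x₂ t = ∑ i, R i := by
    rw [Fin.sum_univ_seven]
    rfl
  rw [hsum, ← hindep.measure_biInter_preimage_Ioi_eq_exp hl hmeas hexp _ hR]
  congr 1
  ext ω
  simp only [R, lt_inf_iff, mem_ofPred_eq, Finset.mem_univ, iInter_true, mem_iInter, mem_preimage,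
    mem_Ioi, Fin.forall_fin_succ, Matrix.cons_val_zero, Matrix.cons_val_succ, Fin.succ_zero_eq_one,
    Fin.succ_one_eq_two, Fin.reduceSucc, sup_lt_iff, Matrix.cons_val_fin_one, IsEmpty.forall_iff,
    and_true]
  tauto

lemma map_marshallOlkin_X₃ [IsProbabilityMeasure μ] (hl : 0 < l) (hmeas : ∀ i, Measurable (E i))
    (hindep : iIndepFun E μ) (hexp : ∀ i, μ.map (E i) = expMeasure l) :
    μ.map (fun ω => min (E 2 ω) (min (E 4 ω) (min (E 5 ω) (E 6 ω)))) = expMeasure (4 * l) := by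
  set X₃ := fun ω => min (E 2 ω) (min (E 4 ω) (min (E 5 ω) (E 6 ω)))
  have hX : Measurable X₃ := by fun_prop
  have := isProbabilityMeasure_expMeasure (by positivity : 0 < 4 * l)
  have htail (t : ℝ) (ht : 0 ≤ t) : μ.map X₃ (Ioi t) = expMeasure (4 * l) (Ioi t) := by
    have hset : X₃ ⁻¹' Ioi t = ⋂ i ∈ ({2, 4, 5, 6} : Finset (Fin 7)), E i ⁻¹' Ioi t := by
      ext ω
      simp [X₃]
    rw [Measure.map_apply hX measurableSet_Ioi, hset, hindep.measure_biInter_preimage_Ioi_eq_exp hl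
      hmeas hexp _ fun _ _ => ht, expMeasure_Ioi (by positivity) ht, Finset.sum_const,
      show ({2, 4, 5, 6} : Finset (Fin 7)).card = 4 from rfl, nsmul_eq_mul, Nat.cast_ofNat,
      mul_left_comm, mul_assoc]
  have := Measure.isProbabilityMeasure_map (μ := μ) hX.aemeasurable
  refine Measure.ext_of_Ioi_of_Iic_eq_zero ?_ (expMeasure_Iic_zero (by positivity)) htail
  rw [← compl_Ioi, prob_compl_eq_one_sub measurableSet_Ioi, htail 0 le_rfl,
    expMeasure_Ioi (by positivity) le_rfl]
  simp

end Model

/-- Conditional survival function of `(X₁,X₂)` given `X₃` in the exchangeable trivariate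
Marshall–Olkin model with all rates `λ`: a version of
`E[𝟙{X₁>x₁, X₂>x₂} | σ(X₃)]` is `F̄(x₁,x₂|X₃)` with
`F̄(x₁,x₂|x₃) = (1/4) e^{-λ(x₁+x₂+max(x₁,x₂))} [4·𝟙{x₁,x₂≤x₃}
+ e^{-λ(x₁+x₂+max(x₁,x₂)-3x₃)}·𝟙{x₁,x₂>x₃} + 2e^{-2λ(x₂-x₃)}·𝟙{x₁≤x₃<x₂}
+ 2e^{-2λ(x₁-x₃)}·𝟙{x₂≤x₃<x₁}]`.
Indexing: `E 0 = E₁, E 1 = E₂, E 2 = E₃, E 3 = E₁₂, E 4 = E₁₃, E 5 = E₂₃, E 6 = E₁₂₃`,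
`X₁ = min(E₁,E₁₂,E₁₃,E₁₂₃)`, `X₂ = min(E₂,E₁₂,E₂₃,E₁₂₃)`, `X₃ = min(E₃,E₁₃,E₂₃,E₁₂₃)`. -/
theorem marshall_olkin_conditional_survival
    {Ω : Type*} [mΩ : MeasurableSpace Ω] (μ : Measure Ω) [IsProbabilityMeasure μ]
    (l : ℝ) (hl : 0 < l) (E : Fin 7 → Ω → ℝ)
    (hmeas : ∀ i, Measurable (E i))
    (hindep : iIndepFun E μ)
    (hexp : ∀ i, Measure.map (E i) μ =
      volume.withDensity (fun x => ENNReal.ofReal (exponentialPDFReal l x)))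
    (X₁ X₂ X₃ : Ω → ℝ)
    (hX₁ : X₁ = fun ω => min (E 0 ω) (min (E 3 ω) (min (E 4 ω) (E 6 ω))))
    (hX₂ : X₂ = fun ω => min (E 1 ω) (min (E 3 ω) (min (E 5 ω) (E 6 ω))))
    (hX₃ : X₃ = fun ω => min (E 2 ω) (min (E 4 ω) (min (E 5 ω) (E 6 ω)))) :
    ∀ x₁ x₂ : ℝ, 0 ≤ x₁ → 0 ≤ x₂ →
      μ[Set.indicator {ω | x₁ < X₁ ω ∧ x₂ < X₂ ω} (fun _ => (1 : ℝ)) |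
          MeasurableSpace.comap X₃ (borel ℝ)] =ᵐ[μ]
        fun ω =>
          (1 / 4) * Real.exp (-(l * (x₁ + x₂ + max x₁ x₂))) *
            ((if x₁ ≤ X₃ ω ∧ x₂ ≤ X₃ ω then (4 : ℝ) else 0) +
              (if X₃ ω < x₁ ∧ X₃ ω < x₂ then
                Real.exp (-(l * (x₁ + x₂ + max x₁ x₂ - 3 * X₃ ω))) else 0) +
              (if x₁ ≤ X₃ ω ∧ X₃ ω < x₂ then 2 * Real.exp (-(2 * l * (x₂ - X₃ ω))) else 0) +
              (if x₂ ≤ X₃ ω ∧ X₃ ω < x₁ then 2 * Real.exp (-(2 * l * (x₁ - X₃ ω))) else 0)) := by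
  intro x₁ x₂ hx₁ hx₂
  simp only [withDensity_exponentialPDFReal] at hexp
  have hX₁m : Measurable X₁ := hX₁ ▸ by fun_prop
  have hX₂m : Measurable X₂ := hX₂ ▸ by fun_prop
  have hX₃m : Measurable X₃ := hX₃ ▸ by fun_prop
  have hA : MeasurableSet {ω | x₁ < X₁ ω ∧ x₂ < X₂ ω} :=
    (measurableSet_lt measurable_const hX₁m).inter (measurableSet_lt measurable_const hX₂m)
  have hlaw : μ.map X₃ = expMeasure (4 * l) := hX₃ ▸ map_marshallOlkin_X₃ hl hmeas hindep hexp
  refine condExp_indicator_comap_ae_eq_comp hX₃m hA (measurable_marshallOlkinCondSurvival l)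
    (marshallOlkinCondSurvival_nonneg l) ?_
  have hlaw0 : μ.map X₃ (Iic 0) = 0 := hlaw ▸ expMeasure_Iic_zero (by positivity)
  refine Measure.ext_of_Ioi_of_Iic_eq_zero (withDensity_absolutelyContinuous _ _ hlaw0)
    ((Measure.absolutelyContinuous_of_le Measure.restrict_le_self).map hX₃m hlaw0) fun t ht => ?_
  rw [withDensity_apply _ measurableSet_Ioi, hlaw,
    setLIntegral_Ioi_marshallOlkinCondSurvival_expMeasure hl ht,
    Measure.map_apply hX₃m measurableSet_Ioi, Measure.restrict_apply (hX₃m measurableSet_Ioi),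
    ← measure_marshallOlkin_survival hl hmeas hindep hexp hx₁ hx₂ ht]
  subst hX₁ hX₂ hX₃
  congr 1
  ext ω
  simp only [mem_inter_iff, mem_preimage, mem_Ioi, mem_ofPred_eq]
  tauto
end
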